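/- arXiv:1910.07165 — 3 statements merged into one kernel-verified Lean document; each statement's English description precedes it below -/
import Mathlib

section
/- Tropical Appell–Humbert uniqueness: with notation as above, two pairs (E, l) and (E', l') of a symmetric bilinear form with E(Λ × N) ⊆ ℤ and a linear form l ∈ Hom(Λ, ℝ) give cohomologous factors of automorphy a_{E,l} and a_{E',l'} (i.e., their difference is of the form (λ, x) ↦ m(λ) for some m : N → ℤ linear, extended ℝ-linearly) if and only if E = E' and (l − l')_ℝ maps N into ℤ. -/
/-!
The difference `a_{E,l}(λ, x) − a_{E',l'}(λ, x)` depends on `x` only through `−(E − E')(λ, x)`,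
so it is independent of `x` exactly when `E` and `E'` agree on `Λ × V`, i.e. everywhere since
`Λ` spans. The difference is then `(l − l')(λ)`, which forces `m = (l − l')_ℝ`.
-/

section AutomorphyFactor

variable {𝕜 V : Type*} [Field 𝕜] [AddCommGroup V] [Module 𝕜 V]

def automorphyFactor (E : V →ₗ[𝕜] V →ₗ[𝕜] 𝕜) (l : V →ₗ[𝕜] 𝕜) (lam x : V) : 𝕜 :=
  l lam - E lam x - E lam lam / 2

theorem automorphyFactor_sub_automorphyFactor (E E' : V →ₗ[𝕜] V →ₗ[𝕜] 𝕜)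
    (l l' : V →ₗ[𝕜] 𝕜) (lam x : V) :
    automorphyFactor E l lam x - automorphyFactor E' l' lam x =
      (automorphyFactor E l lam 0 - automorphyFactor E' l' lam 0) - (E - E') lam x := by
  simp only [automorphyFactor, map_zero, LinearMap.sub_apply]
  ring

theorem automorphyFactor_sub_automorphyFactor_of_form_eq (E : V →ₗ[𝕜] V →ₗ[𝕜] 𝕜)
    (l l' : V →ₗ[𝕜] 𝕜) (lam x : V) :
    automorphyFactor E l lam x - automorphyFactor E l' lam x = (l - l') lam := by
  simp only [automorphyFactor, LinearMap.sub_apply]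
  ring

theorem automorphyFactor_sub_eq_iff {s : Set V} (hs : Submodule.span 𝕜 s = ⊤)
    (E E' : V →ₗ[𝕜] V →ₗ[𝕜] 𝕜) (l l' m : V →ₗ[𝕜] 𝕜) :
    (∀ lam ∈ s, ∀ x, automorphyFactor E l lam x - automorphyFactor E' l' lam x = m lam) ↔
      E = E' ∧ l - l' = m := by
  constructor
  · intro h
    have hE : E = E' := LinearMap.ext_on hs fun lam hlam => LinearMap.ext fun x => by
      have hx := automorphyFactor_sub_automorphyFactor E E' l l' lam x
      rw [h lam hlam x, h lam hlam 0, LinearMap.sub_apply, LinearMap.sub_apply] at hx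
      linear_combination hx
    subst hE
    refine ⟨rfl, LinearMap.ext_on hs fun lam hlam => ?_⟩
    rw [← h lam hlam 0, automorphyFactor_sub_automorphyFactor_of_form_eq]
  · rintro ⟨rfl, rfl⟩ lam _ x
    exact automorphyFactor_sub_automorphyFactor_of_form_eq E l l' lam x

end AutomorphyFactor

theorem tropical_Appell_Humbert_uniqueness_general
    (V : Type*) [AddCommGroup V] [Module ℝ V]
    (N Λ : AddSubgroup V)
    (hΛ : Submodule.span ℝ (Λ : Set V) = ⊤)
    (E E' : V →ₗ[ℝ] V →ₗ[ℝ] ℝ)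
    (l l' : V →ₗ[ℝ] ℝ) :
    (∃ m : V →ₗ[ℝ] ℝ, (∀ n ∈ N, ∃ k : ℤ, m n = (k : ℝ)) ∧
        ∀ lam ∈ Λ, ∀ x : V,
          (l lam - E lam x - E lam lam / 2)
            - (l' lam - E' lam x - E' lam lam / 2) = m lam)
      ↔ (E = E' ∧ ∀ n ∈ N, ∃ k : ℤ, l n - l' n = (k : ℝ)) := by
  constructor
  · rintro ⟨m, hmN, hm⟩
    obtain ⟨rfl, rfl⟩ := (automorphyFactor_sub_eq_iff hΛ E E' l l' m).1 hm
    exact ⟨rfl, hmN⟩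
  · rintro ⟨rfl, hll'⟩
    exact ⟨l - l', hll', (automorphyFactor_sub_eq_iff hΛ E E l l' (l - l')).2 ⟨rfl, rfl⟩⟩

/-- Tropical Appell–Humbert uniqueness: two pairs `(E, l)` and `(E', l')`
give cohomologous factors of automorphy `a_{E,l}` and `a_{E',l'}` (i.e., their difference
is `(λ, x) ↦ m(λ)` for an ℝ-linear `m` taking integer values on `N`) if and only if
`E = E'` and `(l − l')` maps `N` into `ℤ`.  Here `l, l'` are given as the ℝ-linear
extensions of the linear forms on `Λ`. -/
theorem tropical_Appell_Humbert_uniqueness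
    (V : Type*) [AddCommGroup V] [Module ℝ V] [FiniteDimensional ℝ V]
    (N Λ : AddSubgroup V)
    (hN : Submodule.span ℝ (N : Set V) = ⊤)
    (hΛ : Submodule.span ℝ (Λ : Set V) = ⊤)
    (E E' : V →ₗ[ℝ] V →ₗ[ℝ] ℝ)
    (hsymm : ∀ x y : V, E x y = E y x)
    (hsymm' : ∀ x y : V, E' x y = E' y x)
    (hint : ∀ lam ∈ Λ, ∀ n ∈ N, ∃ k : ℤ, E lam n = (k : ℝ))
    (hint' : ∀ lam ∈ Λ, ∀ n ∈ N, ∃ k : ℤ, E' lam n = (k : ℝ))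
    (l l' : V →ₗ[ℝ] ℝ) :
    (∃ m : V →ₗ[ℝ] ℝ, (∀ n ∈ N, ∃ k : ℤ, m n = (k : ℝ)) ∧
        ∀ lam ∈ Λ, ∀ x : V,
          (l lam - E lam x - E lam lam / 2)
            - (l' lam - E' lam x - E' lam lam / 2) = m lam)
      ↔ (E = E' ∧ ∀ n ∈ N, ∃ k : ℤ, l n - l' n = (k : ℝ)) :=
  tropical_Appell_Humbert_uniqueness_general V N Λ hΛ E E' l l'
end

section
/- In the ring (∧ L) ⊗ (∧ M) for free ℤ-modules L, M of rank g with bases (c_k) and (v_k), the (g−d)-th power of the element θ = Σ_{k=1}^g c_k ⊗ v_k equals (g−d)! times Σ_{I ⊆ {1,…,g}, |I| = g−d} (∧_{k∈I} c_k) ⊗ (∧_{k∈I} v_k), where the product of c_k ⊗ v_k and c_l ⊗ v_l is (c_k ∧ c_l) ⊗ (v_k ∧ v_l). -/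
/-!
Write `t k = c k ⊗ v k`. In `(∧L) ⊗ (∧M)` the signs from the two exterior factors cancel, so the
`t k` commute pairwise, and each squares to zero. For such a family, multiplying a product
`∏_{k ∈ I} t k` by `∑_k t k` keeps only the terms with `k ∉ I`, and each `(n + 1)`-set `J` arises
from exactly `n + 1` pairs `(I, k)`; induction on the exponent gives the factor `n!`.
-/

open ExteriorAlgebra TensorProduct

/-- The wedge `∧_{k ∈ I} c k` (indices in increasing order) in the exterior algebra. -/
noncomputable def wedgeSet {g : ℕ} {L : Type*} [AddCommGroup L] [Module ℤ L]
    (c : Fin g → L) (I : Finset (Fin g)) : ExteriorAlgebra ℤ L :=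
  ((I.sort (· ≤ ·)).map fun k => ExteriorAlgebra.ι ℤ (c k)).prod

attribute [local instance 2000] Algebra.toModule

namespace Finset

variable {ι : Type*} [LinearOrder ι]

def sortedProd {A : Type*} [Monoid A] (s : Finset ι) (t : ι → A) : A :=
  ((s.sort (· ≤ ·)).map t).prod

theorem sum_powersetCard_sum_sdiff_insert {β : Type*} [AddCommMonoid β] (s : Finset ι)
    (f : Finset ι → β) (n : ℕ) :
    ∑ I ∈ s.powersetCard n, ∑ k ∈ s \ I, f (insert k I)
      = (n + 1) • ∑ J ∈ s.powersetCard (n + 1), f J := by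
  have hJ : ∀ J ∈ s.powersetCard (n + 1), ∑ _k ∈ J, f J = (n + 1) • f J := fun J hJ => by
    rw [sum_const, (mem_powersetCard.mp hJ).2]
  rw [smul_sum, ← sum_congr rfl hJ, sum_sigma', sum_sigma']
  refine sum_nbij' (fun p => ⟨insert p.2 p.1, p.2⟩) (fun p => ⟨p.1.erase p.2, p.2⟩)
    ?_ ?_ ?_ ?_ (fun _ _ => rfl)
  · rintro ⟨I, k⟩ hp
    simp only [mem_sigma, mem_powersetCard, mem_sdiff] at hp ⊢
    exact ⟨⟨insert_subset hp.2.1 hp.1.1, by rw [card_insert_of_notMem hp.2.2, hp.1.2]⟩,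
      mem_insert_self k I⟩
  · rintro ⟨J, k⟩ hp
    simp only [mem_sigma, mem_powersetCard, mem_sdiff] at hp ⊢
    exact ⟨⟨(erase_subset k J).trans hp.1.1, by rw [card_erase_of_mem hp.2, hp.1.2]; rfl⟩,
      hp.1.1 hp.2, notMem_erase k J⟩
  · rintro ⟨I, k⟩ hp
    simp only [mem_sigma, mem_sdiff] at hp
    simp [erase_insert hp.2.2]
  · rintro ⟨J, k⟩ hp
    simp only [mem_sigma] at hp
    simp [insert_erase hp.2]

section CommutingSquareZero

variable {A : Type*} [Semiring A] {t : ι → A}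

theorem sortedProd_insert (hcomm : ∀ i j, Commute (t i) (t j)) {s : Finset ι} {k : ι}
    (hk : k ∉ s) : (insert k s).sortedProd t = t k * s.sortedProd t := by
  have hperm : ((insert k s).sort (· ≤ ·)).Perm (k :: s.sort (· ≤ ·)) :=
    (sort_perm_toList _ _).trans <| (toList_insert hk).trans <|
      (sort_perm_toList _ _).symm.cons k
  rw [sortedProd, (hperm.map t).prod_eq' <| List.pairwise_of_forall_mem_list fun a ha b hb => ?_]
  · rfl
  obtain ⟨i, -, rfl⟩ := List.mem_map.mp ha
  obtain ⟨j, -, rfl⟩ := List.mem_map.mp hb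
  exact hcomm i j

theorem mul_sortedProd_of_mem (hcomm : ∀ i j, Commute (t i) (t j)) (hsq : ∀ i, t i * t i = 0)
    {s : Finset ι} {k : ι} (hk : k ∈ s) : t k * s.sortedProd t = 0 := by
  rw [← insert_erase hk, sortedProd_insert hcomm (notMem_erase k s), ← mul_assoc, hsq, zero_mul]

theorem sum_mul_sortedProd (hcomm : ∀ i j, Commute (t i) (t j)) (hsq : ∀ i, t i * t i = 0)
    {s I : Finset ι} (hI : I ⊆ s) :
    (∑ k ∈ s, t k) * I.sortedProd t = ∑ k ∈ s \ I, (insert k I).sortedProd t := by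
  rw [sum_mul, ← sum_sdiff hI, sum_eq_zero (fun k hk => mul_sortedProd_of_mem hcomm hsq hk),
    add_zero]
  exact sum_congr rfl fun k hk => (sortedProd_insert hcomm (mem_sdiff.mp hk).2).symm

theorem sum_pow_eq_factorial_nsmul_sum_sortedProd (hcomm : ∀ i j, Commute (t i) (t j))
    (hsq : ∀ i, t i * t i = 0) (s : Finset ι) (n : ℕ) :
    (∑ i ∈ s, t i) ^ n = n.factorial • ∑ I ∈ s.powersetCard n, I.sortedProd t := by
  induction n with
  | zero => simp [sortedProd]
  | succ n ih =>
    rw [pow_succ', ih, mul_smul_comm, mul_sum,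
      sum_congr rfl fun I hI => sum_mul_sortedProd hcomm hsq (mem_powersetCard.mp hI).1,
      sum_powersetCard_sum_sdiff_insert s (sortedProd · t), smul_smul, Nat.factorial_succ,
      mul_comm]

end CommutingSquareZero

end Finset

theorem Algebra.TensorProduct.list_prod_map_tmul {R A B κ : Type*} [CommSemiring R]
    [Semiring A] [Algebra R A] [Semiring B] [Algebra R B] (l : List κ) (a : κ → A) (b : κ → B) :
    (l.map fun i => a i ⊗ₜ[R] b i).prod = (l.map a).prod ⊗ₜ (l.map b).prod := by
  induction l with
  | nil => rfl
  | cons i l ih =>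
    simp only [List.map_cons, List.prod_cons, ih, Algebra.TensorProduct.tmul_mul_tmul]

namespace ExteriorAlgebra

variable {R L M : Type*} [CommRing R] [AddCommGroup L] [Module R L] [AddCommGroup M] [Module R M]

theorem ι_mul_ι_eq_neg (x y : L) : ι R x * ι R y = -(ι R y * ι R x) :=
  eq_neg_of_add_eq_zero_left (ι_add_mul_swap x y)

theorem commute_ι_tmul_ι (x x' : L) (y y' : M) :
    Commute (ι R x ⊗ₜ[R] ι R y) (ι R x' ⊗ₜ[R] ι R y') := by
  rw [Commute, SemiconjBy, Algebra.TensorProduct.tmul_mul_tmul,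
    Algebra.TensorProduct.tmul_mul_tmul, ι_mul_ι_eq_neg x, ι_mul_ι_eq_neg y, neg_tmul, tmul_neg,
    neg_neg]

theorem ι_tmul_ι_mul_self (x : L) (y : M) : (ι R x ⊗ₜ[R] ι R y) * (ι R x ⊗ₜ[R] ι R y) = 0 := by
  rw [Algebra.TensorProduct.tmul_mul_tmul, ι_sq_zero, zero_tmul]

end ExteriorAlgebra

theorem theta_power_expansion_general
    (g d : ℕ)
    (L M : Type*) [AddCommGroup L] [Module ℤ L] [AddCommGroup M] [Module ℤ M]
    (c : Module.Basis (Fin g) ℤ L) (v : Module.Basis (Fin g) ℤ M) :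
    (∑ k : Fin g, (ExteriorAlgebra.ι ℤ (c k)) ⊗ₜ[ℤ] (ExteriorAlgebra.ι ℤ (v k)))
        ^ (g - d)
      = ((g - d).factorial : ℤ) •
          ∑ I ∈ Finset.powersetCard (g - d) (Finset.univ : Finset (Fin g)),
            wedgeSet c I ⊗ₜ[ℤ] wedgeSet v I := by
  rw [Finset.sum_pow_eq_factorial_nsmul_sum_sortedProd
    (fun _ _ => commute_ι_tmul_ι _ _ _ _) (fun _ => ι_tmul_ι_mul_self _ _), natCast_zsmul]
  congr 1
  exact Finset.sum_congr rfl fun I _ => Algebra.TensorProduct.list_prod_map_tmul _ _ _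

/-- In the ring `(∧L) ⊗ (∧M)` (with multiplication
`(a ⊗ w)(b ⊗ x) = (a ∧ b) ⊗ (w ∧ x)`), the `(g−d)`-th power of
`θ = Σ_k c_k ⊗ v_k` equals `(g−d)!` times `Σ_{|I| = g−d} (∧_{k∈I} c_k) ⊗ (∧_{k∈I} v_k)`. -/
theorem theta_power_expansion
    (g d : ℕ) (hd : d ≤ g)
    (L M : Type*) [AddCommGroup L] [Module ℤ L] [AddCommGroup M] [Module ℤ M]
    (c : Module.Basis (Fin g) ℤ L) (v : Module.Basis (Fin g) ℤ M) :
    (∑ k : Fin g, (ExteriorAlgebra.ι ℤ (c k)) ⊗ₜ[ℤ] (ExteriorAlgebra.ι ℤ (v k)))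
        ^ (g - d)
      = ((g - d).factorial : ℤ) •
          ∑ I ∈ Finset.powersetCard (g - d) (Finset.univ : Finset (Fin g)),
            wedgeSet c I ⊗ₜ[ℤ] wedgeSet v I :=
  theta_power_expansion_general g d L M c v
end

section
/- Algebraic Poincaré formula in the model ring: in (∧ L) ⊗ (∧ M) with bases (c_k), (v_k), dual bases (c_k^*), (v_k^*), and the cap product ((α⊗β) ⌢ (x⊗y)) = (α ⌟ x) ⊗ (β ⌟ y), capping the class Q^{g−d}/(g−d)! of the theta divisor, where Q = Σ_k c_k^* ⊗ v_k^*, against the fundamental class (c_1∧⋯∧c_g) ⊗ (v_1∧⋯∧v_g) yields Σ_{|I|=d} (∧_{k∈I} c_k) ⊗ (∧_{k∈I} v_k). -/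
open ExteriorAlgebra TensorProduct

/-- The interior product, extended to an algebra homomorphism
`∧(L^*) → End(∧L)`, via the universal property of the exterior algebra. -/
noncomputable def interiorProd (L : Type*) [AddCommGroup L] [Module ℤ L] :
    ExteriorAlgebra ℤ (Module.Dual ℤ L) →ₐ[ℤ] Module.End ℤ (ExteriorAlgebra ℤ L) :=
  ExteriorAlgebra.lift ℤ
    ⟨CliffordAlgebra.contractLeft (Q := (0 : QuadraticForm ℤ L)),
      fun d => LinearMap.ext fun x => CliffordAlgebra.contractLeft_contractLeft d x⟩

/-- The cap product `((α⊗β) ⌢ (x⊗y)) = (α ⌟ x) ⊗ (β ⌟ y)` on `(∧L^* ⊗ ∧M^*) × (∧L ⊗ ∧M)`. -/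
noncomputable def cap {L M : Type*} [AddCommGroup L] [Module ℤ L]
    [AddCommGroup M] [Module ℤ M]
    (T : ExteriorAlgebra ℤ (Module.Dual ℤ L) ⊗[ℤ] ExteriorAlgebra ℤ (Module.Dual ℤ M))
    (z : ExteriorAlgebra ℤ L ⊗[ℤ] ExteriorAlgebra ℤ M) :
    ExteriorAlgebra ℤ L ⊗[ℤ] ExteriorAlgebra ℤ M :=
  TensorProduct.homTensorHomMap (σ₁₂ := RingHom.id ℤ) _ _ _ _
    ((Algebra.TensorProduct.map (interiorProd L) (interiorProd M)) T) z

/-!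
The summands `x_k = c_k^* ⊗ v_k^*` of `Q` commute (each factor anticommutes) and square to zero,
so `Q^n = n! • Σ_{|S| = n} ∏_{k ∈ S} x_k`. As `∧L ⊗ ∧M` is a free `ℤ`-module, `n!` can be cancelled
after capping. Contracting `c_1 ∧ ⋯ ∧ c_g` with `∏_{k ∈ S} c_k^*` gives `ε • ∧_{k ∉ S} c_k` with
`ε = ±1`, and `ε` depends only on the index lists, so the same sign appears on the `M` side and the
two cancel.
-/

open Finset
open scoped Nat Function

namespace AlgebraicPoincare

section SquareZeroPowers

variable {ι : Type*}

lemma sum_powersetCard_sum_sdiff_insert [DecidableEq ι] {M : Type*} [AddCommMonoid M]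
    (s : Finset ι) (n : ℕ) (f : Finset ι → M) :
    ∑ S ∈ s.powersetCard n, ∑ k ∈ s \ S, f (insert k S)
      = (n + 1) • ∑ T ∈ s.powersetCard (n + 1), f T := by
  have hcount : ∑ S ∈ s.powersetCard n, ∑ k ∈ s \ S, f (insert k S)
      = ∑ T ∈ s.powersetCard (n + 1), ∑ _k ∈ T, f T := by
    rw [sum_sigma', sum_sigma']
    refine sum_nbij' (fun p => ⟨insert p.2 p.1, p.2⟩) (fun p => ⟨p.1.erase p.2, p.2⟩)
      ?_ ?_ ?_ ?_ fun _ _ => rfl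
    · rintro ⟨S, k⟩ h
      simp only [mem_sigma, mem_powersetCard, mem_sdiff] at h ⊢
      exact ⟨⟨insert_subset h.2.1 h.1.1, by rw [card_insert_of_notMem h.2.2, h.1.2]⟩,
        mem_insert_self _ _⟩
    · rintro ⟨T, k⟩ h
      simp only [mem_sigma, mem_powersetCard, mem_sdiff] at h ⊢
      exact ⟨⟨(erase_subset _ _).trans h.1.1, by rw [card_erase_of_mem h.2, h.1.2]; rfl⟩,
        h.1.1 h.2, notMem_erase _ _⟩
    · rintro ⟨S, k⟩ h
      simp only [mem_sigma, mem_sdiff] at h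
      simp [erase_insert h.2.2]
    · rintro ⟨T, k⟩ h
      simp only [mem_sigma] at h
      simp [insert_erase h.2]
  rw [hcount, smul_sum]
  refine sum_congr rfl fun T hT => ?_
  rw [sum_const, (mem_powersetCard.1 hT).2]

variable {A : Type*} [Semiring A] (x : ι → A) (hcomm : Pairwise (Commute on x))

noncomputable def commProd (S : Finset ι) : A :=
  S.noncommProd x (hcomm.set_pairwise _)

variable [DecidableEq ι]

lemma commProd_insert {S : Finset ι} {k : ι} (hk : k ∉ S) :
    commProd x hcomm (insert k S) = commProd x hcomm S * x k :=
  noncommProd_insert_of_notMem' _ _ _ _ hk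

lemma commProd_mul_of_mem (hsq : ∀ k, x k * x k = 0) {S : Finset ι} {k : ι} (hk : k ∈ S) :
    commProd x hcomm S * x k = 0 := by
  rw [commProd, ← noncommProd_erase_mul S hk, mul_assoc, hsq, mul_zero]

theorem sum_pow_eq_factorial_smul_sum_commProd (hsq : ∀ k, x k * x k = 0) (s : Finset ι)
    (n : ℕ) :
    (∑ k ∈ s, x k) ^ n = n ! • ∑ S ∈ s.powersetCard n, commProd x hcomm S := by
  induction n with
  | zero => simp [commProd]
  | succ n ih =>
    have hstep : ∀ S : Finset ι, commProd x hcomm S * ∑ k ∈ s, x k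
        = ∑ k ∈ s \ S, commProd x hcomm (insert k S) := by
      intro S
      rw [mul_sum, sdiff_eq_filter, sum_filter]
      refine sum_congr rfl fun k _ => ?_
      split_ifs with hk
      · rw [commProd_mul_of_mem x hcomm hsq hk]
      · rw [commProd_insert x hcomm hk]
    rw [pow_succ, ih, smul_mul_assoc, sum_mul]
    simp only [hstep]
    rw [sum_powersetCard_sum_sdiff_insert s n (commProd x hcomm), smul_smul, Nat.factorial_succ,
      Nat.mul_comm]

end SquareZeroPowers

lemma sort_filter_notMem_sort {α : Type*} [LinearOrder α] (s S : Finset α) :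
    (s.sort (· ≤ ·)).filter (· ∉ S.sort (· ≤ ·)) = (s \ S).sort (· ≤ ·) :=
  ((s.sortedLT_sort.pairwise.filter _).sortedLT).eq_of_mem_iff (s \ S).sortedLT_sort
    (by simp)

lemma sum_powersetCard_compl {α M : Type*} [Fintype α] [DecidableEq α] [AddCommMonoid M]
    {m n : ℕ} (h : m + n = Fintype.card α) (f : Finset α → M) :
    ∑ S ∈ powersetCard m univ, f Sᶜ = ∑ I ∈ powersetCard n univ, f I := by
  refine sum_nbij' compl compl (fun S hS => ?_) (fun I hI => ?_) (fun S _ => compl_compl S)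
    (fun I _ => compl_compl I) fun _ _ => rfl
  · rw [mem_powersetCard_univ] at hS ⊢
    rw [card_compl, hS]
    omega
  · rw [mem_powersetCard_univ] at hI ⊢
    rw [card_compl, hI]
    omega

lemma prod_map_tmul {κ R A B : Type*} [CommSemiring R] [Semiring A] [Semiring B]
    [Algebra R A] [Algebra R B] (l : List κ) (f : κ → A) (g : κ → B) :
    (l.map fun k => f k ⊗ₜ[R] g k).prod = (l.map f).prod ⊗ₜ[R] (l.map g).prod := by
  induction l with
  | nil => rfl
  | cons k l ih => simp [ih]

section Contraction

variable {κ L : Type*} [AddCommGroup L] [Module ℤ L]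

noncomputable def wedgeList (b : κ → L) (l : List κ) : ExteriorAlgebra ℤ L :=
  (l.map fun k => ι ℤ (b k)).prod

@[simp]
lemma wedgeList_nil (b : κ → L) : wedgeList b [] = 1 := rfl

lemma wedgeSet_eq_wedgeList {g : ℕ} (b : Fin g → L) (I : Finset (Fin g)) :
    wedgeSet b I = wedgeList b (I.sort (· ≤ ·)) :=
  rfl

@[simp]
lemma wedgeList_cons (b : κ → L) (k : κ) (l : List κ) :
    wedgeList b (k :: l) = ι ℤ (b k) * wedgeList b l :=
  List.prod_cons

lemma interiorProd_ι (f : Module.Dual ℤ L) :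
    interiorProd L (ι ℤ f) = CliffordAlgebra.contractLeft (Q := (0 : QuadraticForm ℤ L)) f :=
  lift_ι_apply ℤ _ _ f

lemma interiorProd_ι_one (f : Module.Dual ℤ L) : interiorProd L (ι ℤ f) 1 = 0 :=
  (LinearMap.congr_fun (interiorProd_ι f) 1).trans (CliffordAlgebra.contractLeft_one 0 f)

lemma interiorProd_ι_ι_mul (f : Module.Dual ℤ L) (m : L) (x : ExteriorAlgebra ℤ L) :
    interiorProd L (ι ℤ f) (ι ℤ m * x) = f m • x - ι ℤ m * interiorProd L (ι ℤ f) x := by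
  rw [interiorProd_ι]
  exact CliffordAlgebra.contractLeft_ι_mul f m x

variable [DecidableEq κ]

lemma interiorProd_ι_coord_wedgeList (b : Module.Basis κ ℤ L) (k : κ) {l : List κ}
    (hl : l.Nodup) :
    interiorProd L (ι ℤ (b.coord k)) (wedgeList b l)
      = if k ∈ l then (-1 : ℤ) ^ l.idxOf k • wedgeList b (l.erase k) else 0 := by
  induction l with
  | nil => simp [interiorProd_ι_one]
  | cons j l ih =>
    obtain ⟨hjl, hl⟩ := List.nodup_cons.1 hl
    rw [wedgeList_cons, interiorProd_ι_ι_mul, ih hl]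
    by_cases hjk : j = k
    · subst hjk
      simp [hjl]
    · have hcoord : b.coord k (b j) = 0 := by simp [hjk]
      by_cases hkl : k ∈ l
      · rw [if_pos hkl, if_pos (List.mem_cons_of_mem j hkl), List.idxOf_cons_ne _ hjk,
          List.erase_cons_tail (by simpa using hjk), wedgeList_cons, hcoord, zero_smul,
          zero_sub, mul_smul_comm, pow_succ, mul_neg_one, neg_smul]
      · simp [hcoord, hkl, Ne.symm hjk]

/-- The sign (`±1`, or `0` if `s` is not contained in `t`) acquired when the wedge indexed by `t`
is contracted with the dual basis vectors indexed by `s`, the last one first. -/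
def contractSign (t : List κ) : List κ → ℤ
  | [] => 1
  | k :: s =>
    if k ∈ t.filter (· ∉ s) then (-1) ^ (t.filter (· ∉ s)).idxOf k * contractSign t s else 0

lemma filter_notMem_cons_eq_erase {t : List κ} (ht : t.Nodup) (k : κ) (s : List κ) :
    t.filter (· ∉ k :: s) = (t.filter (· ∉ s)).erase k := by
  rw [(ht.filter _).erase_eq_filter, List.filter_filter]
  congr 1
  funext a
  simp only [decide_not, bne, List.decide_mem_cons, Bool.not_or]

lemma interiorProd_wedgeList_coord (b : Module.Basis κ ℤ L) {t : List κ} (ht : t.Nodup)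
    (s : List κ) :
    interiorProd L (wedgeList (fun k => b.coord k) s) (wedgeList b t)
      = contractSign t s • wedgeList b (t.filter (· ∉ s)) := by
  induction s with
  | nil => simp [contractSign]
  | cons k s ih =>
    rw [wedgeList_cons, map_mul, Module.End.mul_apply, ih, map_smul,
      interiorProd_ι_coord_wedgeList b k (ht.filter _), contractSign]
    split_ifs
    · rw [smul_smul, mul_comm, filter_notMem_cons_eq_erase ht]
    · rw [smul_zero, zero_smul]

lemma contractSign_mul_self {t s : List κ} (hs : s.Nodup) (hst : s ⊆ t) :
    contractSign t s * contractSign t s = 1 := by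
  induction s with
  | nil => rfl
  | cons k s ih =>
    obtain ⟨hks, hs⟩ := List.nodup_cons.1 hs
    have hk : k ∈ t.filter (· ∉ s) := by simpa [hks] using hst List.mem_cons_self
    rw [contractSign, if_pos hk, mul_mul_mul_comm, ← mul_pow, neg_one_mul, neg_neg, one_pow,
      one_mul, ih hs fun a ha => hst (List.mem_cons_of_mem k ha)]

end Contraction

section Cap

variable {L M : Type*} [AddCommGroup L] [Module ℤ L] [AddCommGroup M] [Module ℤ M]

lemma cap_smul (n : ℤ)
    (T : ExteriorAlgebra ℤ (Module.Dual ℤ L) ⊗[ℤ] ExteriorAlgebra ℤ (Module.Dual ℤ M))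
    (z : ExteriorAlgebra ℤ L ⊗[ℤ] ExteriorAlgebra ℤ M) :
    cap (n • T) z = n • cap T z := by
  rw [cap, cap, map_zsmul, map_zsmul, LinearMap.smul_apply]

lemma cap_sum {α : Type*} (s : Finset α)
    (T : α → ExteriorAlgebra ℤ (Module.Dual ℤ L) ⊗[ℤ] ExteriorAlgebra ℤ (Module.Dual ℤ M))
    (z : ExteriorAlgebra ℤ L ⊗[ℤ] ExteriorAlgebra ℤ M) :
    cap (∑ i ∈ s, T i) z = ∑ i ∈ s, cap (T i) z := by
  simp [cap]

lemma cap_tmul (α : ExteriorAlgebra ℤ (Module.Dual ℤ L))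
    (β : ExteriorAlgebra ℤ (Module.Dual ℤ M)) (x : ExteriorAlgebra ℤ L) (y : ExteriorAlgebra ℤ M) :
    cap (α ⊗ₜ β) (x ⊗ₜ y) = interiorProd L α x ⊗ₜ interiorProd M β y := by
  simp [cap]

end Cap

lemma ι_mul_ι_eq_neg {N : Type*} [AddCommGroup N] [Module ℤ N] (x y : N) :
    ι ℤ x * ι ℤ y = -(ι ℤ y * ι ℤ x) :=
  eq_neg_of_add_eq_zero_left (ι_add_mul_swap x y)

section ThetaClass

variable {κ L M : Type*} [AddCommGroup L] [Module ℤ L] [AddCommGroup M] [Module ℤ M]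
  (c : Module.Basis κ ℤ L) (v : Module.Basis κ ℤ M)

noncomputable def coordTmul (k : κ) :
    ExteriorAlgebra ℤ (Module.Dual ℤ L) ⊗[ℤ] ExteriorAlgebra ℤ (Module.Dual ℤ M) :=
  ι ℤ (c.coord k) ⊗ₜ ι ℤ (v.coord k)

lemma coordTmul_commute (i j : κ) : Commute (coordTmul c v i) (coordTmul c v j) := by
  simp only [Commute, SemiconjBy, coordTmul, Algebra.TensorProduct.tmul_mul_tmul]
  rw [ι_mul_ι_eq_neg (c.coord i), ι_mul_ι_eq_neg (v.coord i), neg_tmul, tmul_neg, neg_neg]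

lemma coordTmul_pairwise_commute : Pairwise (Commute on coordTmul c v) :=
  fun i j _ => coordTmul_commute c v i j

lemma coordTmul_mul_self (k : κ) : coordTmul c v k * coordTmul c v k = 0 := by
  simp only [coordTmul, Algebra.TensorProduct.tmul_mul_tmul, ι_sq_zero, zero_tmul]

lemma commProd_coordTmul [LinearOrder κ] (S : Finset κ) :
    commProd (coordTmul c v) (coordTmul_pairwise_commute c v) S
      = wedgeList (fun k => c.coord k) (S.sort (· ≤ ·))
        ⊗ₜ wedgeList (fun k => v.coord k) (S.sort (· ≤ ·)) := by
  have h := noncommProd_toFinset (S.sort (· ≤ ·)) (coordTmul c v)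
    ((coordTmul_pairwise_commute c v).set_pairwise _) (S.sort_nodup _)
  simp only [sort_toFinset] at h
  unfold commProd
  exact h.trans (prod_map_tmul _ _ _)

end ThetaClass

lemma cap_commProd_coordTmul {g : ℕ} {L M : Type*} [AddCommGroup L] [Module ℤ L] [AddCommGroup M]
    [Module ℤ M] (c : Module.Basis (Fin g) ℤ L) (v : Module.Basis (Fin g) ℤ M)
    {S I : Finset (Fin g)} (hSI : S ⊆ I) :
    cap (commProd (coordTmul c v) (coordTmul_pairwise_commute c v) S)
        (wedgeSet c I ⊗ₜ wedgeSet v I)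
      = wedgeSet c (I \ S) ⊗ₜ wedgeSet v (I \ S) := by
  have hsub : S.sort (· ≤ ·) ⊆ I.sort (· ≤ ·) := fun a ha => by simpa using hSI (by simpa using ha)
  simp only [wedgeSet_eq_wedgeList]
  rw [commProd_coordTmul, cap_tmul, interiorProd_wedgeList_coord c (I.sort_nodup _),
    interiorProd_wedgeList_coord v (I.sort_nodup _), sort_filter_notMem_sort, ← smul_tmul',
    tmul_smul, smul_smul, contractSign_mul_self (S.sort_nodup _) hsub, one_smul]

end AlgebraicPoincare

open AlgebraicPoincare

/-- Algebraic Poincaré formula in the model ring: capping the class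
`Q^{g−d}/(g−d)!` of the theta divisor, where `Q = Σ_k c_k^* ⊗ v_k^*`, against the
fundamental class `(c_1∧⋯∧c_g) ⊗ (v_1∧⋯∧v_g)` yields
`Σ_{|I|=d} (∧_{k∈I} c_k) ⊗ (∧_{k∈I} v_k)`. -/
theorem algebraic_poincare_formula
    (g d : ℕ) (hd : d ≤ g)
    (L M : Type*) [AddCommGroup L] [Module ℤ L] [AddCommGroup M] [Module ℤ M]
    (c : Module.Basis (Fin g) ℤ L) (v : Module.Basis (Fin g) ℤ M)
    (T : ExteriorAlgebra ℤ (Module.Dual ℤ L) ⊗[ℤ] ExteriorAlgebra ℤ (Module.Dual ℤ M))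
    (hT : ((g - d).factorial : ℤ) • T
      = (∑ k : Fin g, (ExteriorAlgebra.ι ℤ (c.coord k : Module.Dual ℤ L))
          ⊗ₜ[ℤ] (ExteriorAlgebra.ι ℤ (v.coord k : Module.Dual ℤ M))) ^ (g - d)) :
    cap T (wedgeSet c Finset.univ ⊗ₜ[ℤ] wedgeSet v Finset.univ)
      = ∑ I ∈ Finset.powersetCard d (Finset.univ : Finset (Fin g)),
          wedgeSet c I ⊗ₜ[ℤ] wedgeSet v I := by
  have : Module.Free ℤ (ExteriorAlgebra ℤ L) := .of_basis c.ExteriorAlgebra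
  have : Module.Free ℤ (ExteriorAlgebra ℤ M) := .of_basis v.ExteriorAlgebra
  have : Module.Free ℤ (ExteriorAlgebra ℤ L ⊗[ℤ] ExteriorAlgebra ℤ M) := Module.Free.tensor
  have hQ : ∑ k : Fin g, ι ℤ (c.coord k) ⊗ₜ[ℤ] ι ℤ (v.coord k) = ∑ k, coordTmul c v k := rfl
  rw [hQ, sum_pow_eq_factorial_smul_sum_commProd _ (coordTmul_pairwise_commute c v)
    (coordTmul_mul_self c v), ← Nat.cast_smul_eq_nsmul ℤ] at hT
  have hfact : ((g - d).factorial : ℤ) ≠ 0 := Nat.cast_ne_zero.2 (g - d).factorial_ne_zero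
  refine smul_right_injective _ hfact ?_
  dsimp only
  rw [← cap_smul, hT, cap_smul, cap_sum,
    ← sum_powersetCard_compl (by simp; omega : g - d + d = Fintype.card (Fin g))]
  congr 1
  refine sum_congr rfl fun S _ => ?_
  rw [cap_commProd_coordTmul c v (subset_univ S), compl_eq_univ_sdiff]
end
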